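/- The neutralized local entropy is f-invariant almost everywhere: for a bi-Lipschitz diffeomorphism f of a compact metric space and an f-invariant Borel probability measure μ, the function E_μ(x) := lim_{r→0} limsup_{n→∞} (−1/n) log μ(B(x,n,e^{−rn})) satisfies E_μ(f(x)) = E_μ(x) for every x (where the limit in r exists by monotonicity). -/

import Mathlib

open Filter MeasureTheory

/-- The Bowen ball `B(x, n, ε)`. -/
def bowen {M : Type*} [PseudoMetricSpace M] (f : M → M) (x : M) (n : ℕ) (ε : ℝ) : Set M :=
  {y | ∀ i ≤ n, dist (f^[i] x) (f^[i] y) ≤ ε}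

/-- `limsup_{n → ∞} (-1/n) log μ(B(x, n, e^{-rn}))`, as an extended real. -/
noncomputable def nlRate {M : Type*} [PseudoMetricSpace M] [MeasurableSpace M]
    (μ : Measure M) (f : M → M) (x : M) (r : ℝ) : EReal :=
  limsup (fun n : ℕ =>
    (((-1 : ℝ) / n * Real.log (μ (bowen f x n (Real.exp (-r * n)))).toReal : ℝ) : EReal)) atTop

/-- The neutralized local entropy: the inner limsup is nondecreasing in `r`,
so the limit as `r → 0⁺` exists and equals the infimum over `r > 0`. -/
noncomputable def nlEnt {M : Type*} [PseudoMetricSpace M] [MeasurableSpace M]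
    (μ : Measure M) (f : M → M) (x : M) : EReal :=
  ⨅ (r : ℝ) (_ : 0 < r), nlRate μ f x r

/-! Since `f` preserves `μ` and both `f` and its left inverse `g` are `L`-Lipschitz, pulling Bowen
balls back by `f` gives `μ B(x, n, ε) ≤ μ B(f x, n, L ε)` and `μ B(f x, n, ε) ≤ μ B(x, n, L ε)`.
For `r > 0` the constant `L` is eventually absorbed by doubling the rate, `L e^{-2rn} ≤ e^{-rn}`,
so the rates at `x` and `f x` bound each other with `r` and `2r`, and their infima over `r > 0`
agree. Because `log 0 = 0` in the definition, a null Bowen ball has to be treated apart: it makes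
the entropy at both points vanish. -/

open scoped NNReal Topology

section Bowen

variable {M : Type*} [PseudoMetricSpace M] {f g : M → M}

lemma bowen_subset_bowen {x : M} {m n : ℕ} {δ ε : ℝ} (hmn : m ≤ n) (hδε : δ ≤ ε) :
    bowen f x n δ ⊆ bowen f x m ε :=
  fun _ hy i hi => (hy i (hi.trans hmn)).trans hδε

lemma bowen_exp_subset_bowen_exp (x : M) {m n : ℕ} {r : ℝ} (hr : 0 ≤ r) (hmn : m ≤ n) :
    bowen f x n (Real.exp (-r * n)) ⊆ bowen f x m (Real.exp (-r * m)) := by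
  have hmn' : (m : ℝ) ≤ n := by exact_mod_cast hmn
  exact bowen_subset_bowen hmn (Real.exp_le_exp.2 (by nlinarith))

lemma isClosed_bowen (hf : Continuous f) (x : M) (n : ℕ) (ε : ℝ) : IsClosed (bowen f x n ε) := by
  simp only [bowen, Set.ofPred_forall]
  exact isClosed_iInter fun i => isClosed_iInter fun _ =>
    isClosed_le (continuous_const.dist (hf.iterate i)) continuous_const

lemma bowen_subset_preimage_bowen {K : ℝ≥0} (hf : LipschitzWith K f) (x : M) (n : ℕ) (ε : ℝ) :
    bowen f x n ε ⊆ f ⁻¹' bowen f (f x) n (K * ε) := by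
  intro y hy i hi
  simp only [← Function.iterate_succ_apply, Function.iterate_succ_apply']
  calc dist (f (f^[i] x)) (f (f^[i] y)) ≤ K * dist (f^[i] x) (f^[i] y) := hf.dist_le_mul _ _
    _ ≤ K * ε := by gcongr; exact hy i hi

lemma preimage_bowen_subset_bowen {K : ℝ≥0} (hg : LipschitzWith K g)
    (hgf : Function.LeftInverse g f) (hK : 1 ≤ K) (x : M) (n : ℕ) (ε : ℝ) :
    f ⁻¹' bowen f (f x) n ε ⊆ bowen f x n (K * ε) := by
  intro y hy i hi
  have hε : 0 ≤ ε := dist_nonneg.trans (hy 0 (Nat.zero_le n))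
  cases i with
  | zero =>
    calc dist x y = dist (g (f x)) (g (f y)) := by rw [hgf x, hgf y]
      _ ≤ K * dist (f x) (f y) := hg.dist_le_mul _ _
      _ ≤ K * ε := by gcongr; simpa using hy 0 (Nat.zero_le n)
  | succ j =>
    rw [Function.iterate_succ_apply, Function.iterate_succ_apply]
    exact (hy j (by omega)).trans (le_mul_of_one_le_left hε (mod_cast hK))

end Bowen

section Invariance

variable {M : Type*} [PseudoMetricSpace M] [MeasurableSpace M] {μ : Measure M} {f g : M → M}
  {K : ℝ≥0}

lemma measure_bowen_le_measure_bowen_apply (hinv : MeasurePreserving f μ μ)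
    (hf : LipschitzWith K f) (x : M) (n : ℕ) (ε : ℝ) :
    μ (bowen f x n ε) ≤ μ (bowen f (f x) n (K * ε)) :=
  calc μ (bowen f x n ε) ≤ μ (f ⁻¹' bowen f (f x) n (K * ε)) :=
        measure_mono (bowen_subset_preimage_bowen hf x n ε)
    _ ≤ μ.map f (bowen f (f x) n (K * ε)) := Measure.le_map_apply hinv.aemeasurable _
    _ = μ (bowen f (f x) n (K * ε)) := by rw [hinv.map_eq]

lemma measure_bowen_apply_le_measure_bowen [OpensMeasurableSpace M]
    (hinv : MeasurePreserving f μ μ) (hf : Continuous f) (hg : LipschitzWith K g)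
    (hgf : Function.LeftInverse g f) (hK : 1 ≤ K) (x : M) (n : ℕ) (ε : ℝ) :
    μ (bowen f (f x) n ε) ≤ μ (bowen f x n (K * ε)) :=
  calc μ (bowen f (f x) n ε) = μ (f ⁻¹' bowen f (f x) n ε) :=
        (hinv.measure_preimage (isClosed_bowen hf _ _ _).measurableSet.nullMeasurableSet).symm
    _ ≤ μ (bowen f x n (K * ε)) := measure_mono (preimage_bowen_subset_bowen hg hgf hK x n ε)

end Invariance

section Entropy

variable {M : Type*} [PseudoMetricSpace M] [MeasurableSpace M] (μ : Measure M) (f : M → M)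

lemma nlRate_nonneg [IsProbabilityMeasure μ] (x : M) (r : ℝ) : 0 ≤ nlRate μ f x r := by
  refine le_limsup_of_frequently_le' (Frequently.of_forall fun n => ?_)
  have hlog : Real.log (μ (bowen f x n (Real.exp (-r * n)))).toReal ≤ 0 :=
    Real.log_nonpos ENNReal.toReal_nonneg (ENNReal.toReal_le_of_le_ofReal zero_le_one
      (by simpa using prob_le_one))
  exact EReal.coe_nonneg.2 (mul_nonneg_of_nonpos_of_nonpos
    (div_nonpos_of_nonpos_of_nonneg (by norm_num) n.cast_nonneg) hlog)

lemma nlRate_nonpos_of_eventually_measure_eq_zero {x : M} {r : ℝ}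
    (h : ∀ᶠ n : ℕ in atTop, μ (bowen f x n (Real.exp (-r * n))) = 0) : nlRate μ f x r ≤ 0 :=
  limsup_le_of_le (by isBoundedDefault) (h.mono fun n hn => by rw [hn]; simp)

lemma nlRate_le_nlRate_of_eventually_le [IsFiniteMeasure μ] {x y : M} {r s : ℝ}
    (hpos : ∀ᶠ n : ℕ in atTop, 0 < μ (bowen f y n (Real.exp (-s * n))))
    (hle : ∀ᶠ n : ℕ in atTop,
      μ (bowen f y n (Real.exp (-s * n))) ≤ μ (bowen f x n (Real.exp (-r * n)))) :
    nlRate μ f x r ≤ nlRate μ f y s := by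
  refine limsup_le_limsup ?_ (by isBoundedDefault) (by isBoundedDefault)
  filter_upwards [hpos, hle] with n hpos hle
  have hlog := Real.log_le_log (ENNReal.toReal_pos hpos.ne' (measure_ne_top μ _))
    (ENNReal.toReal_mono (measure_ne_top μ _) hle)
  exact EReal.coe_le_coe_iff.2 (mul_le_mul_of_nonpos_left hlog
    (div_nonpos_of_nonpos_of_nonneg (by norm_num) n.cast_nonneg))

lemma nlEnt_le_of_forall_eventually_le [IsProbabilityMeasure μ] {x y : M}
    (hxy : ∀ r > 0, ∀ᶠ n : ℕ in atTop,
      μ (bowen f y n (Real.exp (-(2 * r) * n))) ≤ μ (bowen f x n (Real.exp (-r * n))))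
    (hyx : ∀ r > 0, ∀ᶠ n : ℕ in atTop,
      μ (bowen f x n (Real.exp (-(2 * r) * n))) ≤ μ (bowen f y n (Real.exp (-r * n)))) :
    nlEnt μ f x ≤ nlEnt μ f y := by
  refine le_iInf₂ fun s hs => ?_
  by_cases hpos : ∀ n : ℕ, 0 < μ (bowen f y n (Real.exp (-s * n)))
  · have hle := hxy (s / 2) (half_pos hs)
    rw [show 2 * (s / 2) = s by ring] at hle
    exact (iInf₂_le (s / 2) (half_pos hs)).trans
      (nlRate_le_nlRate_of_eventually_le μ f (Eventually.of_forall hpos) hle)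
  · simp only [not_forall, not_lt] at hpos
    obtain ⟨N, hN⟩ := hpos
    have hnull : ∀ᶠ n : ℕ in atTop, μ (bowen f x n (Real.exp (-(2 * s) * n))) = 0 := by
      filter_upwards [hyx s hs, eventually_ge_atTop N] with n hn hNn
      exact le_zero_iff.1
        (hn.trans ((measure_mono (bowen_exp_subset_bowen_exp y hs.le hNn)).trans hN))
    calc nlEnt μ f x ≤ nlRate μ f x (2 * s) := iInf₂_le _ (by positivity)
      _ ≤ 0 := nlRate_nonpos_of_eventually_measure_eq_zero μ f hnull
      _ ≤ nlRate μ f y s := nlRate_nonneg μ f y s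

lemma nlEnt_eq_of_forall_eventually_le [IsProbabilityMeasure μ] {x y : M}
    (hxy : ∀ r > 0, ∀ᶠ n : ℕ in atTop,
      μ (bowen f y n (Real.exp (-(2 * r) * n))) ≤ μ (bowen f x n (Real.exp (-r * n))))
    (hyx : ∀ r > 0, ∀ᶠ n : ℕ in atTop,
      μ (bowen f x n (Real.exp (-(2 * r) * n))) ≤ μ (bowen f y n (Real.exp (-r * n)))) :
    nlEnt μ f x = nlEnt μ f y :=
  le_antisymm (nlEnt_le_of_forall_eventually_le μ f hxy hyx)
    (nlEnt_le_of_forall_eventually_le μ f hyx hxy)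

lemma eventually_mul_exp_le (C : ℝ) {r : ℝ} (hr : 0 < r) :
    ∀ᶠ n : ℕ in atTop, C * Real.exp (-(2 * r) * n) ≤ Real.exp (-r * n) := by
  have hlim : Tendsto (fun n : ℕ => C * Real.exp (-(r * n))) atTop (𝓝 (C * 0)) :=
    (Real.tendsto_exp_neg_atTop_nhds_zero.comp
      (tendsto_natCast_atTop_atTop.const_mul_atTop hr)).const_mul C
  filter_upwards [hlim.eventually (gt_mem_nhds (show C * 0 < 1 by simp))] with n hn
  calc C * Real.exp (-(2 * r) * n) = C * Real.exp (-(r * n)) * Real.exp (-r * n) := by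
        rw [mul_assoc, ← Real.exp_add]; ring_nf
    _ ≤ 1 * Real.exp (-r * n) := by gcongr
    _ = Real.exp (-r * n) := one_mul _

lemma eventually_measure_bowen_exp_le {x y : M} {C : ℝ}
    (h : ∀ n ε, μ (bowen f y n ε) ≤ μ (bowen f x n (C * ε))) (r : ℝ) (hr : 0 < r) :
    ∀ᶠ n : ℕ in atTop,
      μ (bowen f y n (Real.exp (-(2 * r) * n))) ≤ μ (bowen f x n (Real.exp (-r * n))) :=
  (eventually_mul_exp_le C hr).mono fun n hn =>
    (h n _).trans (measure_mono (bowen_subset_bowen le_rfl hn))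

end Entropy

theorem stmt2_general {M : Type*} [MetricSpace M] [MeasurableSpace M] [BorelSpace M]
    (f g : M → M) (L : NNReal) (hL : 1 ≤ L)
    (hf : LipschitzWith L f) (hg : LipschitzWith L g)
    (hgf : Function.LeftInverse g f)
    (μ : Measure M) [IsProbabilityMeasure μ] (hinv : MeasurePreserving f μ μ) :
    ∀ x : M, nlEnt μ f (f x) = nlEnt μ f x := fun x =>
  nlEnt_eq_of_forall_eventually_le μ f
    (eventually_measure_bowen_exp_le μ f (measure_bowen_le_measure_bowen_apply hinv hf x))
    (eventually_measure_bowen_exp_le μ f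
      (measure_bowen_apply_le_measure_bowen hinv hf.continuous hg hgf hL x))

theorem stmt2 {M : Type*} [MetricSpace M] [CompactSpace M] [MeasurableSpace M] [BorelSpace M]
    (f g : M → M) (L : NNReal) (hL : 1 ≤ L)
    (hf : LipschitzWith L f) (hg : LipschitzWith L g)
    (hgf : Function.LeftInverse g f) (hfg : Function.RightInverse g f)
    (μ : Measure M) [IsProbabilityMeasure μ] (hinv : MeasurePreserving f μ μ) :
    ∀ x : M, nlEnt μ f (f x) = nlEnt μ f x :=
  stmt2_general f g L hL hf hg hgf μ hinv
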